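/- arXiv:1801.00328 — 3 statements merged into one kernel-verified Lean document; each statement's English description precedes it below -/
import Mathlib

section
/- Both leaf edges (edges incident to an endpoint) of a non-crossing spanning path of a set of points in convex position in the plane are boundary edges of the convex hull. -/
/-!
If the first edge `ab` of the path were a diagonal, the hull neighbours `a + 1` and `a - 1` of `a`
would lie strictly on opposite sides of it. The rest of the path visits both of them, avoids `a`
and `b`, and none of its edges crosses `ab`, so it never changes sides: a contradiction. The last
edge is the first edge of the reversed path.
-/

namespace PG

/-- The `k`-th vertex (mod `n`) of the convex polygon. -/
def pt (n : ℕ) (hn : 0 < n) (k : ℕ) : Fin n := ⟨k % n, Nat.mod_lt _ hn⟩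

/-- `e` is a boundary (convex hull) edge of the convex `n`-gon. -/
def IsHullEdge {n : ℕ} (e : Sym2 (Fin n)) : Prop :=
  ∃ a b : Fin n, e = s(a, b) ∧ ((a.val + 1) % n = b.val ∨ (b.val + 1) % n = a.val)

instance {n : ℕ} : DecidablePred (IsHullEdge (n := n)) := fun _ => by
  unfold IsHullEdge; infer_instance

/-- Two chords of the convex `n`-gon cross (intersect in interior points):
their endpoint pairs are all distinct and separate each other in the cyclic order. -/
def Crosses {n : ℕ} (e f : Sym2 (Fin n)) : Prop :=
  ∃ a b c d : Fin n, e = s(a, b) ∧ f = s(c, d) ∧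
    a ≠ b ∧ c ≠ d ∧ a ≠ c ∧ a ≠ d ∧ b ≠ c ∧ b ≠ d ∧
    (((c.val + n - a.val) % n < (b.val + n - a.val) % n) ↔
      ¬((d.val + n - a.val) % n < (b.val + n - a.val) % n))

instance {n : ℕ} (e f : Sym2 (Fin n)) : Decidable (Crosses e f) := by
  unfold Crosses; infer_instance

/-- The edge set of the spanning path visiting the points in the order given
by the permutation `p`. -/
def pathEdges {n : ℕ} (p : Equiv.Perm (Fin n)) : Finset (Sym2 (Fin n)) :=
  Finset.univ.filter (fun e => ∃ i j : Fin n, e = s(p i, p j) ∧ j.val = i.val + 1)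

/-- `E` is the edge set of a non-crossing (plane) spanning path. -/
def IsNCPath {n : ℕ} (E : Finset (Sym2 (Fin n))) : Prop :=
  (∃ p : Equiv.Perm (Fin n), E = pathEdges p) ∧ ∀ e ∈ E, ∀ f ∈ E, ¬ Crosses e f

instance {n : ℕ} : DecidablePred (IsNCPath (n := n)) := fun _ => by
  unfold IsNCPath pathEdges; infer_instance

/-- Vertices of the path graph `G(P)`: non-crossing spanning paths. -/
def PVert (n : ℕ) := {E : Finset (Sym2 (Fin n)) // IsNCPath E}

instance {n : ℕ} : Fintype (PVert n) := Subtype.fintype _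
instance {n : ℕ} : DecidableEq (PVert n) := Subtype.instDecidableEq

/-- The path graph `G(P)`: two plane spanning paths are adjacent iff their
edge sets differ in exactly two edges. -/
def pathGraph (n : ℕ) : SimpleGraph (PVert n) where
  Adj u v := u ≠ v ∧ (u.1 \ v.1 ∪ v.1 \ u.1).card = 2
  symm := by constructor; rintro u v ⟨h1, h2⟩; exact ⟨h1.symm, by rwa [Finset.union_comm]⟩
  loopless := by constructor; rintro u ⟨h, _⟩; exact h rfl

instance {n : ℕ} : DecidableRel (pathGraph n).Adj := fun u v => by
  unfold pathGraph; infer_instance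

/-- `v` is a boundary path: all its edges are hull edges. -/
def IsBoundary {n : ℕ} (v : PVert n) : Prop := ∀ e ∈ v.1, IsHullEdge e

/-- Number of diagonals (the level) of a path. -/
def diagCount {n : ℕ} (v : PVert n) : ℕ :=
  (v.1.filter (fun e => ¬ IsHullEdge e)).card

/-- Degree of a point in an edge set. -/
def degIn {n : ℕ} (E : Finset (Sym2 (Fin n))) (x : Fin n) : ℕ :=
  (E.filter (fun e => x ∈ e)).card

section

variable {n : ℕ}

/-- `c` lies on the cyclic arc of the polygon from `a` (included) to `b` (excluded). -/
def OnArc (a b c : Fin n) : Prop := (c - a).val < (b - a).val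

lemma add_sub_mod_eq_val_sub (a c : Fin n) : (c.val + n - a.val) % n = (c - a).val := by
  rw [Fin.val_sub]
  congr 1
  omega

lemma onArc_iff_of_not_crosses {a b c d : Fin n} (hab : a ≠ b) (hcd : c ≠ d) (hac : a ≠ c)
    (had : a ≠ d) (hbc : b ≠ c) (hbd : b ≠ d) (h : ¬ Crosses s(a, b) s(c, d)) :
    OnArc a b c ↔ OnArc a b d := by
  by_contra hne
  refine h ⟨a, b, c, d, rfl, rfl, hab, hcd, hac, had, hbc, hbd, ?_⟩
  simp only [add_sub_mod_eq_val_sub]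
  unfold OnArc at hne
  tauto

lemma onArc_iff_of_chain {a b : Fin n} (hab : a ≠ b) (q : ℕ → Fin n) {i j : ℕ} (hij : i ≤ j)
    (havoid : ∀ k, i ≤ k → k ≤ j → q k ≠ a ∧ q k ≠ b)
    (hstep : ∀ k, i ≤ k → k < j → q k ≠ q (k + 1) ∧ ¬ Crosses s(a, b) s(q k, q (k + 1))) :
    OnArc a b (q i) ↔ OnArc a b (q j) := by
  induction j, hij using Nat.le_induction with
  | base => rfl
  | succ j hij ih =>
    obtain ⟨hne, hnc⟩ := hstep j hij j.lt_succ_self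
    obtain ⟨hja, hjb⟩ := havoid j hij j.le_succ
    obtain ⟨hj'a, hj'b⟩ := havoid (j + 1) (hij.trans j.le_succ) le_rfl
    refine (ih (fun k hik hkj => havoid k hik (hkj.trans j.le_succ))
      (fun k hik hkj => hstep k hik (hkj.trans j.lt_succ_self))).trans ?_
    exact onArc_iff_of_not_crosses hab hne hja.symm hj'a.symm hjb.symm hj'b.symm hnc

section NeZero

variable [NeZero n]

lemma isHullEdge_of_eq_add_one {a b : Fin n} (h : b = a + 1) : IsHullEdge s(a, b) :=
  ⟨a, b, rfl, Or.inl (by rw [h, Fin.val_add, Fin.val_one', Nat.add_mod_mod])⟩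

lemma not_onArc_sub_one (a b : Fin n) : ¬ OnArc a b (a - 1) := by
  unfold OnArc
  rw [sub_sub_cancel_left, not_lt, Fin.val_neg', Fin.val_one']
  have hlt := (b - a).isLt
  rcases Nat.lt_or_ge 1 n with hn | hn
  · rw [Nat.mod_eq_of_lt hn, Nat.mod_eq_of_lt (by omega)]
    omega
  · omega

lemma onArc_add_one {a b : Fin n} (hab : a ≠ b) (h : ¬ IsHullEdge s(a, b)) :
    OnArc a b (a + 1) := by
  unfold OnArc
  rw [add_sub_cancel_left]
  by_contra hle
  have hpos : (b - a).val ≠ 0 := fun h0 => hab (sub_eq_zero.mp (Fin.ext h0)).symm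
  have hone : (1 : Fin n) = b - a := Fin.ext <| by
    rw [Fin.val_one'] at hle ⊢
    have := Nat.mod_le 1 n
    omega
  exact h (isHullEdge_of_eq_add_one (sub_eq_iff_eq_add'.mp hone.symm))

end NeZero

lemma pt_of_lt (hn : 0 < n) {k : ℕ} (hk : k < n) : pt n hn k = ⟨k, hk⟩ :=
  Fin.ext (Nat.mod_eq_of_lt hk)

lemma mem_pathEdges (p : Equiv.Perm (Fin n)) {i j : Fin n} (h : j.val = i.val + 1) :
    s(p i, p j) ∈ pathEdges p :=
  Finset.mem_filter.mpr ⟨Finset.mem_univ _, i, j, rfl, h⟩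

lemma mem_pathEdges_pt (hn : 0 < n) (p : Equiv.Perm (Fin n)) {k : ℕ} (hk : k + 1 < n) :
    s(p (pt n hn k), p (pt n hn (k + 1))) ∈ pathEdges p := by
  rw [pt_of_lt hn (k.lt_succ_self.trans hk), pt_of_lt hn hk]
  exact mem_pathEdges p rfl

lemma pathEdges_revPerm_trans (p : Equiv.Perm (Fin n)) :
    pathEdges (Fin.revPerm.trans p) = pathEdges p := by
  ext e
  simp only [pathEdges, Finset.mem_filter, Finset.mem_univ, true_and, Equiv.trans_apply,
    Fin.revPerm_apply]
  constructor
  · rintro ⟨i, j, rfl, hij⟩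
    exact ⟨j.rev, i.rev, Sym2.eq_swap, by simp only [Fin.val_rev]; omega⟩
  · rintro ⟨i, j, rfl, hij⟩
    exact ⟨j.rev, i.rev, by rw [Fin.rev_rev, Fin.rev_rev, Sym2.eq_swap],
      by simp only [Fin.val_rev]; omega⟩

theorem isHullEdge_first_edge (hn : 1 < n) (p : Equiv.Perm (Fin n))
    (hnc : ∀ e ∈ pathEdges p, ∀ f ∈ pathEdges p, ¬ Crosses e f) :
    IsHullEdge s(p ⟨0, by omega⟩, p ⟨1, hn⟩) := by
  have : NeZero n := ⟨by omega⟩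
  have h0 : 0 < n := by omega
  set q : ℕ → Fin n := fun k => p (pt n h0 k) with hq
  have hq_inj : ∀ i j, i < n → j < n → q i = q j → i = j := fun i j hi hj h => by
    simpa [hq, pt_of_lt h0 hi, pt_of_lt h0 hj] using h
  have hq_symm : ∀ z, q (p.symm z).val = z := fun z => by
    simp only [hq, pt_of_lt h0 (p.symm z).isLt, Fin.eta, Equiv.apply_symm_apply]
  rw [show p ⟨0, h0⟩ = q 0 by simp [hq, pt_of_lt h0 h0],
    show p ⟨1, hn⟩ = q 1 by simp [hq, pt_of_lt h0 hn]]
  by_contra hdiag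
  have hab : q 0 ≠ q 1 := fun h => zero_ne_one (hq_inj 0 1 h0 hn h)
  have hlater : ∀ z, z ≠ q 0 → z ≠ q 1 → 2 ≤ (p.symm z).val := fun z hz0 hz1 => by
    by_contra! hlt
    interval_cases h : (p.symm z).val
    · exact hz0 (by rw [← h, hq_symm])
    · exact hz1 (by rw [← h, hq_symm])
  have hfirst : s(q 0, q 1) ∈ pathEdges p := mem_pathEdges_pt h0 p (k := 0) hn
  have hside : ∀ z, z ≠ q 0 → z ≠ q 1 → (OnArc (q 0) (q 1) (q 2) ↔ OnArc (q 0) (q 1) z) :=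
    fun z hz0 hz1 => by
      conv_rhs => rw [← hq_symm z]
      refine onArc_iff_of_chain hab q (hlater z hz0 hz1) (fun k hk hkz => ⟨?_, ?_⟩)
        (fun k hk hkz => ⟨?_, hnc _ hfirst _ ?_⟩)
      all_goals have := (p.symm z).isLt
      · exact fun h => by have := hq_inj k 0 (by omega) h0 h; omega
      · exact fun h => by have := hq_inj k 1 (by omega) hn h; omega
      · exact fun h => by have := hq_inj k (k + 1) (by omega) (by omega) h; omega
      · exact mem_pathEdges_pt h0 p (by omega)
  have hone : (1 : Fin n) ≠ 0 := fun h => by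
    simp [Fin.ext_iff, Nat.mod_eq_of_lt hn] at h
  have hsucc : q 0 + 1 ≠ q 1 := fun h => hdiag (isHullEdge_of_eq_add_one h.symm)
  have hpred : q 0 - 1 ≠ q 1 := fun h => hdiag (by
    rw [Sym2.eq_swap]
    exact isHullEdge_of_eq_add_one (sub_eq_iff_eq_add.mp h))
  have := (hside _ (by simpa using hone) hsucc).symm.trans (hside _ (by simpa using hone) hpred)
  exact not_onArc_sub_one (q 0) (q 1) (this.mp (onArc_add_one hab hdiag))

end

/-- Both leaf edges of a non-crossing spanning path of a convex point set
are boundary edges of the convex hull. -/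
theorem leaf_edges_are_hull_edges (n : ℕ) (hn : 3 ≤ n) (p : Equiv.Perm (Fin n))
    (hnc : ∀ e ∈ pathEdges p, ∀ f ∈ pathEdges p, ¬ Crosses e f) :
    IsHullEdge (s(p ⟨0, by omega⟩, p ⟨1, by omega⟩)) ∧
    IsHullEdge (s(p ⟨n - 2, by omega⟩, p ⟨n - 1, by omega⟩)) := by
  refine ⟨isHullEdge_first_edge (by omega) p hnc, ?_⟩
  have hrev := isHullEdge_first_edge (by omega) (Fin.revPerm.trans p)
    (by rwa [pathEdges_revPerm_trans])
  rwa [Sym2.eq_swap] at hrev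

end PG
end

section
/- Let u and v be adjacent vertices of the path graph G(P), i.e., non-crossing spanning paths differing in exactly two edges. Then every common neighbor w of u and v in G(P) satisfies exactly one of: (1) the edge set of w contains the intersection of the edge sets of u and v (plus one extra edge), or (2) the edge set of w is contained in the union of the edge sets of u and v (missing one common edge). Consequently, every edge of G(P) lies in at most two maximal cliques. -/
/-!
Every plane spanning path has `n - 1` edges, so two paths are adjacent in `G(P)` exactly when
one of them has a single edge outside the other. For adjacent `u, v` put `I = u ∩ v` and
`U = u ∪ v`, of sizes `n - 2` and `n`. A common neighbour `w` of `u` and `v` loses one edge of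
`u`; if that edge lies in `I` then `w ⊆ U`, otherwise `I ⊆ w`, and `I ⊆ w ⊆ U` would force
`w ∈ {u, v}`. The paths containing `I` (namely `I` plus one edge) form a clique, and so do the
paths contained in `U` (namely `U` minus one edge). A path of the first kind not inside `U` and
a path of the second kind not containing `I` differ in at least two edges, so a
maximal clique through `uv` cannot mix them and is one of these two cliques.
-/

namespace PG

/-- A maximal clique in a graph. -/
def IsMaxClique {V : Type*} (G : SimpleGraph V) (s : Set V) : Prop :=
  G.IsClique s ∧ ∀ t : Set V, G.IsClique t → s ⊆ t → t ⊆ s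


end PG

namespace Finset

variable {α : Type*} [DecidableEq α] {A B C I U X Y : Finset α}

theorem ne_of_card_sdiff_eq_one (h : #(A \ B) = 1) : A ≠ B := by
  rintro rfl
  simp at h

theorem card_symmDiff_eq_two_iff (h : #A = #B) : #(A \ B ∪ B \ A) = 2 ↔ #(A \ B) = 1 := by
  rw [card_union_of_disjoint disjoint_sdiff_sdiff, ← card_sdiff_comm h]
  omega

theorem card_sdiff_eq_one_of_card_sdiff_le_one (h : #(A \ B) ≤ 1) (hBA : #B ≤ #A)
    (hne : A ≠ B) : #(A \ B) = 1 := by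
  have hpos : 0 < #(A \ B) :=
    card_pos.mpr (sdiff_nonempty.mpr fun hAB => hne (eq_of_subset_of_card_le hAB hBA))
  omega

theorem card_sdiff_eq_one_of_common_subset (hIA : I ⊆ A) (hIB : I ⊆ B) (hA : #A ≤ #I + 1)
    (hBA : #B ≤ #A) (hne : A ≠ B) : #(A \ B) = 1 := by
  refine card_sdiff_eq_one_of_card_sdiff_le_one ?_ hBA hne
  calc #(A \ B) ≤ #(A \ I) := card_le_card (sdiff_subset_sdiff subset_rfl hIB)
    _ = #A - #I := card_sdiff_of_subset hIA
    _ ≤ 1 := by omega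

theorem card_sdiff_eq_one_of_common_superset (hAU : A ⊆ U) (hBU : B ⊆ U) (hU : #U ≤ #B + 1)
    (hBA : #B ≤ #A) (hne : A ≠ B) : #(A \ B) = 1 := by
  refine card_sdiff_eq_one_of_card_sdiff_le_one ?_ hBA hne
  calc #(A \ B) ≤ #(U \ B) := card_le_card (sdiff_subset_sdiff hAU subset_rfl)
    _ = #U - #B := card_sdiff_of_subset hBU
    _ ≤ 1 := by omega

theorem inter_subset_or_subset_union (hAB : #(A \ B) = 1) (hAC : #(A \ C) = 1)
    (hCB : #(C \ B) = 1) : A ∩ B ⊆ C ∨ C ⊆ A ∪ B := by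
  refine or_iff_not_imp_left.mpr fun hI => ?_
  obtain ⟨x, hxI, hxC⟩ := not_subset.mp hI
  obtain ⟨e, heAB⟩ : (A \ B).Nonempty := card_pos.mp (by omega)
  obtain ⟨heA, heB⟩ := mem_sdiff.mp heAB
  -- `x` is the only element of `A` outside `C`, and `e ≠ x` because `x ∈ B`
  have heC : e ∈ C := by
    by_contra heC
    have hex : e = x := card_le_one.mp hAC.le e (mem_sdiff.mpr ⟨heA, heC⟩) x
      (mem_sdiff.mpr ⟨(mem_inter.mp hxI).1, hxC⟩)
    exact heB (hex ▸ (mem_inter.mp hxI).2)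
  intro c hc
  by_cases hcB : c ∈ B
  · exact mem_union_right A hcB
  · have hce : c = e := card_le_one.mp hCB.le c (mem_sdiff.mpr ⟨hc, hcB⟩) e
      (mem_sdiff.mpr ⟨heC, heB⟩)
    exact mem_union_left B (hce ▸ heA)

theorem eq_or_eq_of_inter_subset_of_subset_union (hAB : #(A \ B) = 1) (hCA : #C ≤ #A)
    (hBC : #B ≤ #C) (hI : A ∩ B ⊆ C) (hU : C ⊆ A ∪ B) : A = C ∨ C = B := by
  obtain ⟨e, he⟩ := card_eq_one.mp hAB
  have hmem {a : α} : a ∈ A ∧ a ∉ B ↔ a = e := by rw [← mem_sdiff, he, mem_singleton]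
  by_cases heC : e ∈ C
  · refine .inl (eq_of_subset_of_card_le (fun a ha => ?_) hCA)
    by_cases haB : a ∈ B
    · exact hI (mem_inter.mpr ⟨ha, haB⟩)
    · exact hmem.mp ⟨ha, haB⟩ ▸ heC
  · refine .inr (eq_of_subset_of_card_le (fun c hc => ?_) hBC)
    by_contra hcB
    have hcA := (mem_union.mp (hU hc)).resolve_right hcB
    exact heC (hmem.mp ⟨hcA, hcB⟩ ▸ hc)

theorem xor_inter_subset_subset_union (hAB : #(A \ B) = 1) (hAC : #(A \ C) = 1)
    (hCB : #(C \ B) = 1) (hCA : #C ≤ #A) (hBC : #B ≤ #C) :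
    Xor (A ∩ B ⊆ C) (C ⊆ A ∪ B) := by
  refine (xor_iff_or_and_not_and _ _).mpr ⟨inter_subset_or_subset_union hAB hAC hCB, ?_⟩
  rintro ⟨hI, hU⟩
  rcases eq_or_eq_of_inter_subset_of_subset_union hAB hCA hBC hI hU with h | h
  · exact ne_of_card_sdiff_eq_one hAC h
  · exact ne_of_card_sdiff_eq_one hCB h

theorem one_lt_card_sdiff_of_not_subset_of_not_superset (hIU : I ⊆ U) (hIX : I ⊆ X)
    (hXU : ¬X ⊆ U) (hYU : Y ⊆ U) (hIY : ¬I ⊆ Y) : 1 < #(X \ Y) := by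
  obtain ⟨b, hbX, hbU⟩ := not_subset.mp hXU
  obtain ⟨a, haI, haY⟩ := not_subset.mp hIY
  refine one_lt_card.mpr ⟨b, mem_sdiff.mpr ⟨hbX, fun hbY => hbU (hYU hbY)⟩,
    a, mem_sdiff.mpr ⟨hIX haI, haY⟩, ?_⟩
  rintro rfl
  exact hbU (hIU haI)

end Finset

namespace PG

open Finset

theorem IsMaxClique.eq_or_eq_of_subset_union {V : Type*} {G : SimpleGraph V}
    {s t₁ t₂ : Set V} (hs : IsMaxClique G s) (h₁ : G.IsClique t₁) (h₂ : G.IsClique t₂)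
    (hst : s ⊆ t₁ ∪ t₂) (hsep : ∀ x ∈ t₁ \ t₂, ∀ y ∈ t₂ \ t₁, ¬G.Adj x y) :
    s = t₁ ∨ s = t₂ := by
  by_cases hs₁ : s ⊆ t₁
  · exact .inl (hs₁.antisymm (hs.2 t₁ h₁ hs₁))
  obtain ⟨y, hys, hyt₁⟩ := Set.not_subset.mp hs₁
  have hyt₂ : y ∈ t₂ := (hst hys).resolve_left hyt₁
  have hs₂ : s ⊆ t₂ := fun x hxs => by
    by_contra hxt₂
    have hxt₁ : x ∈ t₁ := (hst hxs).resolve_right hxt₂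
    exact hsep x ⟨hxt₁, hxt₂⟩ y ⟨hyt₂, hyt₁⟩
      (hs.1 hxs hys fun hxy => hyt₁ (hxy ▸ hxt₁))
  exact .inr (hs₂.antisymm (hs.2 t₂ h₂ hs₂))

variable {n : ℕ}

theorem card_pathEdges (p : Equiv.Perm (Fin n)) : #(pathEdges p) = n - 1 := by
  let edge (i : Fin (n - 1)) : Sym2 (Fin n) := s(p ⟨i, by omega⟩, p ⟨i + 1, by omega⟩)
  have himage : pathEdges p = univ.image edge := by
    ext e
    simp only [pathEdges, mem_filter, mem_univ, true_and, mem_image, edge]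
    constructor
    · rintro ⟨i, j, rfl, hj⟩
      refine ⟨⟨i, by omega⟩, ?_⟩
      rw [show (⟨i + 1, _⟩ : Fin n) = j from Fin.ext hj.symm]
    · rintro ⟨i, rfl⟩
      exact ⟨_, _, rfl, rfl⟩
  have hinj : Function.Injective edge := by
    intro i j hij
    rcases Sym2.eq_iff.mp hij with ⟨h₁, -⟩ | ⟨h₁, h₂⟩
    · exact Fin.ext (by simpa using p.injective h₁)
    · have h₁ := congrArg Fin.val (p.injective h₁)
      have h₂ := congrArg Fin.val (p.injective h₂)
      simp only at h₁ h₂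
      omega
  rw [himage, card_image_of_injective _ hinj, card_univ, Fintype.card_fin]

theorem card_edges (w : PVert n) : #w.1 = n - 1 := by
  obtain ⟨p, hp⟩ := w.2.1
  rw [hp, card_pathEdges]

theorem pathGraph_adj_iff {u v : PVert n} : (pathGraph n).Adj u v ↔ #(u.1 \ v.1) = 1 := by
  have hcard := card_symmDiff_eq_two_iff ((card_edges u).trans (card_edges v).symm)
  refine ⟨fun h => hcard.mp h.2, fun h => ⟨?_, hcard.mpr h⟩⟩
  exact fun huv => ne_of_card_sdiff_eq_one h (congrArg Subtype.val huv)

variable {u v : PVert n}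

theorem isClique_setOf_inter_subset (huv : (pathGraph n).Adj u v) :
    (pathGraph n).IsClique {w : PVert n | u.1 ∩ v.1 ⊆ w.1} := by
  intro x hx y hy hxy
  rw [pathGraph_adj_iff] at huv ⊢
  refine card_sdiff_eq_one_of_common_subset hx hy ?_ (by rw [card_edges, card_edges])
    fun h => hxy (Subtype.ext h)
  rw [card_edges x, ← card_edges u, ← card_inter_add_card_sdiff u.1 v.1, huv]

theorem isClique_setOf_subset_union (huv : (pathGraph n).Adj u v) :
    (pathGraph n).IsClique {w : PVert n | w.1 ⊆ u.1 ∪ v.1} := by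
  intro x hx y hy hxy
  rw [pathGraph_adj_iff]
  refine card_sdiff_eq_one_of_common_superset hx hy ?_ (by rw [card_edges, card_edges])
    fun h => hxy (Subtype.ext h)
  rw [union_comm, ← card_sdiff_add_card, pathGraph_adj_iff.mp huv.symm, card_edges y,
    card_edges u, add_comm]

theorem xor_of_adj_of_adj {w : PVert n} (huv : (pathGraph n).Adj u v)
    (huw : (pathGraph n).Adj u w) (hvw : (pathGraph n).Adj v w) :
    Xor (u.1 ∩ v.1 ⊆ w.1) (w.1 ⊆ u.1 ∪ v.1) :=
  xor_inter_subset_subset_union (pathGraph_adj_iff.mp huv) (pathGraph_adj_iff.mp huw)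
    (pathGraph_adj_iff.mp hvw.symm) (by rw [card_edges, card_edges])
    (by rw [card_edges, card_edges])

theorem IsMaxClique.eq_or_eq_of_mem_of_mem {s : Set (PVert n)} (huv : (pathGraph n).Adj u v)
    (hs : IsMaxClique (pathGraph n) s) (hu : u ∈ s) (hv : v ∈ s) :
    s = {w | u.1 ∩ v.1 ⊆ w.1} ∨ s = {w | w.1 ⊆ u.1 ∪ v.1} := by
  refine hs.eq_or_eq_of_subset_union (isClique_setOf_inter_subset huv)
    (isClique_setOf_subset_union huv) (fun w hw => ?_) fun x hx y hy hxy => ?_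
  · obtain rfl | hwu := eq_or_ne w u
    · exact .inl inter_subset_left
    obtain rfl | hwv := eq_or_ne w v
    · exact .inl inter_subset_right
    exact (xor_of_adj_of_adj huv (hs.1 hu hw hwu.symm) (hs.1 hv hw hwv.symm)).or
  · exact (one_lt_card_sdiff_of_not_subset_of_not_superset inter_subset_union hx.1 hx.2 hy.1
      hy.2).ne' (pathGraph_adj_iff.mp hxy)

theorem common_neighbor_dichotomy_general (n : ℕ) (u v : PVert n)
    (huv : (pathGraph n).Adj u v) :
    (∀ w : PVert n, (pathGraph n).Adj u w → (pathGraph n).Adj v w →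
      Xor' (u.1 ∩ v.1 ⊆ w.1) (w.1 ⊆ u.1 ∪ v.1)) ∧
    (∀ s₁ s₂ s₃ : Set (PVert n),
      IsMaxClique (pathGraph n) s₁ → u ∈ s₁ → v ∈ s₁ →
      IsMaxClique (pathGraph n) s₂ → u ∈ s₂ → v ∈ s₂ →
      IsMaxClique (pathGraph n) s₃ → u ∈ s₃ → v ∈ s₃ →
      s₁ = s₂ ∨ s₁ = s₃ ∨ s₂ = s₃) := by
  refine ⟨fun w huw hvw => xor_of_adj_of_adj huv huw hvw, ?_⟩
  intro s₁ s₂ s₃ h₁ hu₁ hv₁ h₂ hu₂ hv₂ h₃ hu₃ hv₃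
  rcases h₁.eq_or_eq_of_mem_of_mem huv hu₁ hv₁ with rfl | rfl <;>
  rcases h₂.eq_or_eq_of_mem_of_mem huv hu₂ hv₂ with rfl | rfl <;>
  rcases h₃.eq_or_eq_of_mem_of_mem huv hu₃ hv₃ with rfl | rfl <;>
  simp

/-- For adjacent `u, v` in `G(P)`, every common neighbor `w` satisfies exactly one of:
its edge set contains `u ∩ v` (plus one extra edge), or is contained in `u ∪ v`
(missing one common edge).  Consequently every edge of `G(P)` lies in at most two
maximal cliques. -/
theorem common_neighbor_dichotomy (n : ℕ) (hn : 3 ≤ n) (u v : PVert n)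
    (huv : (pathGraph n).Adj u v) :
    (∀ w : PVert n, (pathGraph n).Adj u w → (pathGraph n).Adj v w →
      Xor' (u.1 ∩ v.1 ⊆ w.1) (w.1 ⊆ u.1 ∪ v.1)) ∧
    (∀ s₁ s₂ s₃ : Set (PVert n),
      IsMaxClique (pathGraph n) s₁ → u ∈ s₁ → v ∈ s₁ →
      IsMaxClique (pathGraph n) s₂ → u ∈ s₂ → v ∈ s₂ →
      IsMaxClique (pathGraph n) s₃ → u ∈ s₃ → v ∈ s₃ →
      s₁ = s₂ ∨ s₁ = s₃ ∨ s₂ = s₃) :=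
  common_neighbor_dichotomy_general n u v huv

end PG
end

section
/- Let P_1, ..., P_k be vertex-disjoint boundary paths (possibly single vertices) appearing in this cyclic order and covering all vertices of a convex point set P. Then there are at most k ways to add k-1 diagonals to P_1 ∪ ... ∪ P_k so as to obtain a non-crossing spanning path whose set of hull edges is exactly the edges of P_1 ∪ ... ∪ P_k. -/
/-!
Every prefix of a plane spanning path visits a cyclic arc of the hull and stops at one of its
ends. Consequently, once the start and the set `H` of hull edges are fixed, every step is forced,
so a path is determined by either of its endpoints. Both endpoints are ends of the boundary paths
formed by `H`, at most two for each of the `k` boundary paths, and distinct paths have distinct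
endpoints.
-/

namespace PG

section Offset

variable {n : ℕ} [NeZero n]

def offset (v x : Fin n) : ℕ := (x - v).val

omit [NeZero n] in
lemma offset_eq_mod (v x : Fin n) : offset v x = (x.val + n - v.val) % n := by
  rw [offset, Fin.val_sub]; congr 1; omega

lemma offset_self (v : Fin n) : offset v v = 0 := by simp [offset]

omit [NeZero n] in
lemma offset_lt (v x : Fin n) : offset v x < n := (x - v).isLt

lemma offset_injective (v : Fin n) : Function.Injective (offset v) := fun x y h => by
  simpa [offset] using Fin.ext h

lemma exists_offset_eq (v : Fin n) {m : ℕ} (hm : m < n) : ∃ x, offset v x = m :=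
  ⟨v + Fin.ofNat n m, by simp [offset, Nat.mod_eq_of_lt hm]⟩

lemma offset_add_one {v z : Fin n} (h : offset v z + 1 < n) :
    offset v (z + 1) = offset v z + 1 := by
  rw [offset, show z + 1 - v = (z - v) + 1 by abel, Fin.val_add, Fin.val_one',
    Nat.add_mod_mod]
  exact Nat.mod_eq_of_lt h

lemma offset_rebase (v w x : Fin n) :
    offset w x = if offset v w ≤ offset v x then offset v x - offset v w
      else offset v x + n - offset v w := by
  unfold offset
  rw [show x - w = (x - v) - (w - v) by abel]
  split_ifs with h
  · exact Fin.coe_sub_iff_le.mpr h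
  · rw [Fin.coe_sub_iff_lt.mpr (not_le.mp h)]; omega

lemma crosses_of_offset {v a b c d : Fin n} (hac : offset v a < offset v c)
    (hcb : offset v c < offset v b) (hd : offset v d < offset v a ∨ offset v b < offset v d) :
    Crosses s(a, b) s(c, d) := by
  have hne : ∀ x y : Fin n, offset v x ≠ offset v y → x ≠ y :=
    fun x y h hxy => h (hxy ▸ rfl)
  refine ⟨a, b, c, d, rfl, rfl, hne _ _ (by omega), hne _ _ (by omega), hne _ _ (by omega),
    hne _ _ (by omega), hne _ _ (by omega), hne _ _ (by omega), ?_⟩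
  simp only [← offset_eq_mod]
  have := offset_lt v b
  refine iff_of_true ?_ ?_ <;> simp only [offset_rebase v a] <;> split_ifs <;> omega

end Offset

section HullEdge

variable {n : ℕ} [NeZero n]

def hullEdge (z : Fin n) : Sym2 (Fin n) := s(z, z + 1)

lemma eq_add_one_iff_val {a b : Fin n} : b = a + 1 ↔ (a.val + 1) % n = b.val := by
  rw [Fin.ext_iff, Fin.val_add, Fin.val_one', Nat.add_mod_mod, eq_comm]

lemma isHullEdge_mk_iff {a b : Fin n} : IsHullEdge s(a, b) ↔ b = a + 1 ∨ a = b + 1 := by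
  simp only [IsHullEdge, ← eq_add_one_iff_val, Sym2.eq_iff]
  constructor
  · rintro ⟨a', b', ⟨rfl, rfl⟩ | ⟨rfl, rfl⟩, h⟩ <;> tauto
  · intro h; exact ⟨a, b, Or.inl ⟨rfl, rfl⟩, h⟩

lemma isHullEdge_iff_exists {e : Sym2 (Fin n)} : IsHullEdge e ↔ ∃ z, hullEdge z = e := by
  induction e using Sym2.ind with
  | _ a b =>
    rw [isHullEdge_mk_iff]
    constructor
    · rintro (rfl | rfl)
      exacts [⟨a, rfl⟩, ⟨b, Sym2.eq_swap⟩]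
    · rintro ⟨z, hz⟩
      rcases Sym2.eq_iff.mp hz with ⟨rfl, rfl⟩ | ⟨rfl, rfl⟩ <;> tauto

lemma isHullEdge_hullEdge (z : Fin n) : IsHullEdge (hullEdge z) :=
  isHullEdge_iff_exists.mpr ⟨z, rfl⟩

open Fin.CommRing in
lemma hullEdge_injective (hn : 3 ≤ n) : Function.Injective (hullEdge (n := n)) := by
  intro a b h
  rcases Sym2.eq_iff.mp h with ⟨h1, -⟩ | ⟨rfl, h2⟩
  · exact h1
  · have h2 : ((2 : ℕ) : Fin n) = 0 := by push_cast; linear_combination h2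
    have := Nat.le_of_dvd two_pos (Fin.natCast_eq_zero.mp h2)
    omega

lemma card_filter_hullEdge_not_mem (hn : 3 ≤ n) {H : Finset (Sym2 (Fin n))}
    (hH : ∀ e ∈ H, IsHullEdge e) :
    (Finset.univ.filter fun z => hullEdge z ∉ H).card = n - H.card := by
  have hmem : (Finset.univ.filter fun z => hullEdge z ∈ H).card = H.card := by
    refine Finset.card_nbij hullEdge (fun z hz => (Finset.mem_filter.mp hz).2)
      (fun a _ b _ h => hullEdge_injective hn h) (fun e he => ?_)
    obtain ⟨z, rfl⟩ := isHullEdge_iff_exists.mp (hH e he)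
    exact ⟨z, by simpa using he, rfl⟩
  have := Finset.card_filter_add_card_filter_not (s := Finset.univ) (fun z => hullEdge z ∈ H)
  rw [Finset.card_univ, Fintype.card_fin] at this
  omega

end HullEdge

section Walk

variable {n : ℕ} [NeZero n] (p : Equiv.Perm (Fin n))

/-- The `j`-th vertex of the path `p`; indices are read modulo `n`. -/
def walk (j : ℕ) : Fin n := p (Fin.ofNat n j)

lemma walk_val (i : Fin n) : walk p i.val = p i := by simp [walk]

lemma walk_zero : walk p 0 = p 0 := walk_val p 0

lemma walk_inj {j k : ℕ} (hj : j < n) (hk : k < n) (h : walk p j = walk p k) : j = k := by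
  simpa [Nat.mod_eq_of_lt hj, Nat.mod_eq_of_lt hk] using congrArg Fin.val (p.injective h)

lemma exists_walk_eq (x : Fin n) : ∃ j < n, walk p j = x :=
  ⟨(p.symm x).val, (p.symm x).isLt, by simp [walk_val]⟩

lemma mem_pathEdges_iff {e : Sym2 (Fin n)} :
    e ∈ pathEdges p ↔ ∃ t, t + 1 < n ∧ e = s(walk p t, walk p (t + 1)) := by
  simp only [pathEdges, Finset.mem_filter, Finset.mem_univ, true_and]
  constructor
  · rintro ⟨i, j, rfl, hij⟩
    refine ⟨i.val, hij ▸ j.isLt, ?_⟩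
    rw [← hij, walk_val, walk_val]
  · rintro ⟨t, ht, rfl⟩
    exact ⟨⟨t, by omega⟩, ⟨t + 1, ht⟩, by rw [← walk_val, ← walk_val], rfl⟩

lemma walk_mem_pathEdges {t : ℕ} (ht : t + 1 < n) : s(walk p t, walk p (t + 1)) ∈ pathEdges p :=
  (mem_pathEdges_iff p).mpr ⟨t, ht, rfl⟩

omit [NeZero n] in
lemma pathEdges_reverse : pathEdges (Fin.revPerm.trans p) = pathEdges p := by
  ext e
  simp only [pathEdges, Finset.mem_filter, Finset.mem_univ, true_and, Equiv.trans_apply,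
    Fin.revPerm_apply]
  constructor
  · rintro ⟨i, j, rfl, hij⟩
    exact ⟨j.rev, i.rev, Sym2.eq_swap, by simp only [Fin.val_rev]; omega⟩
  · rintro ⟨i, j, rfl, hij⟩
    exact ⟨j.rev, i.rev, by rw [Fin.rev_rev, Fin.rev_rev]; exact Sym2.eq_swap,
      by simp only [Fin.val_rev]; omega⟩

lemma hullEdge_start_not_mem (hn : 3 ≤ n) :
    hullEdge (p 0) ∉ pathEdges p ∨ hullEdge (p 0 - 1) ∉ pathEdges p := by
  have hstart : ∀ e ∈ pathEdges p, p 0 ∈ e → e = s(walk p 0, walk p 1) := by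
    intro e he h0
    obtain ⟨t, ht, rfl⟩ := (mem_pathEdges_iff p).mp he
    rw [← walk_zero] at h0
    rcases Sym2.mem_iff.mp h0 with h | h
    · rw [walk_inj p (by omega) (by omega) h.symm]
    · exact absurd (walk_inj p (by omega) ht h) (by omega)
  by_contra! h
  have hsucc := hstart _ h.1 (Sym2.mem_mk_left _ _)
  have hpred := hstart _ h.2 (by rw [hullEdge, sub_add_cancel]; exact Sym2.mem_mk_right _ _)
  have := hullEdge_injective hn (hsucc.trans hpred.symm)
  rw [eq_comm, sub_eq_self, Fin.one_eq_zero_iff] at this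
  omega

end Walk

lemma exists_flip_of_le (g : ℕ → Prop) {a b : ℕ} (hab : a ≤ b) (ha : g a) (hb : ¬ g b) :
    ∃ t, a ≤ t ∧ t < b ∧ g t ∧ ¬ g (t + 1) := by
  induction b, hab using Nat.le_induction with
  | base => exact absurd ha hb
  | succ b hab ih =>
    by_cases hgb : g b
    · exact ⟨b, hab, b.lt_succ_self, hgb, hb⟩
    · obtain ⟨t, h₁, h₂, h₃, h₄⟩ := ih hgb
      exact ⟨t, h₁, by omega, h₃, h₄⟩

lemma exists_flip (g : ℕ → Prop) {a b : ℕ} (ha : g a) (hb : ¬ g b) :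
    ∃ t, min a b ≤ t ∧ t < max a b ∧ (g t ↔ ¬ g (t + 1)) := by
  rcases le_total a b with hab | hba
  · obtain ⟨t, h₁, h₂, h₃, h₄⟩ := exists_flip_of_le g hab ha hb
    exact ⟨t, by omega, by omega, iff_of_true h₃ h₄⟩
  · obtain ⟨t, h₁, h₂, h₃, h₄⟩ := exists_flip_of_le (¬ g ·) hba hb (not_not.mpr ha)
    exact ⟨t, by omega, by omega, iff_of_false h₃ h₄⟩

section Arc

variable {n : ℕ} [NeZero n] {p : Equiv.Perm (Fin n)} {r l : ℕ}

/-- After `r + l` steps the path has visited exactly the vertices at offsets `0, …, r` and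
`n - l, …, n - 1` from its start, and it stands at one end of this arc. -/
structure IsArcPrefix (p : Equiv.Perm (Fin n)) (r l : ℕ) : Prop where
  visited : ∀ j ≤ r + l,
    offset (walk p 0) (walk p j) ≤ r ∨ n - l ≤ offset (walk p 0) (walk p j)
  unvisited : ∀ j, r + l < j → j < n →
    r < offset (walk p 0) (walk p j) ∧ offset (walk p 0) (walk p j) < n - l
  last : offset (walk p 0) (walk p (r + l)) = r ∨ offset (walk p 0) (walk p (r + l)) = n - l

lemma offset_walk_inj {v : Fin n} {j k : ℕ} (hj : j < n) (hk : k < n)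
    (h : offset v (walk p j) = offset v (walk p k)) : j = k :=
  walk_inj p hj hk (offset_injective v h)

lemma isArcPrefix_zero : IsArcPrefix p 0 0 where
  visited j hj := by
    obtain rfl : j = 0 := by omega
    simp [offset_self]
  unvisited j hj hjn := by
    refine ⟨Nat.pos_of_ne_zero fun h => ?_, by simpa using offset_lt _ _⟩
    exact absurd (offset_walk_inj hjn (NeZero.pos n) (h.trans (offset_self _).symm)) (by omega)
  last := Or.inl (offset_self _)

lemma IsArcPrefix.exists_later (h : IsArcPrefix p r l) {m : ℕ} (hrm : r < m) (hml : m < n - l)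
    (hmx : m ≠ offset (walk p 0) (walk p (r + l + 1))) :
    ∃ j, r + l + 1 < j ∧ j < n ∧ offset (walk p 0) (walk p j) = m := by
  obtain ⟨y, hy⟩ := exists_offset_eq (walk p 0) (show m < n by omega)
  obtain ⟨j, hj, rfl⟩ := exists_walk_eq p y
  refine ⟨j, ?_, hj, hy⟩
  rcases lt_trichotomy j (r + l + 1) with hlt | rfl | hgt
  · rcases h.visited j (by omega) with h' | h' <;> omega
  · exact absurd hy.symm hmx
  · exact hgt

/-- The step after `r + l` goes to an end of the unvisited arc: a step into its interior would
leave unvisited vertices on both sides, and the rest of the path would have to cross it. -/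
lemma IsArcPrefix.offset_succ (hp : IsNCPath (pathEdges p)) (h : IsArcPrefix p r l)
    (hi : r + l + 1 < n) :
    offset (walk p 0) (walk p (r + l + 1)) = r + 1 ∨
      offset (walk p 0) (walk p (r + l + 1)) = n - l - 1 := by
  obtain ⟨hxr, hxl⟩ := h.unvisited (r + l + 1) (by omega) hi
  obtain ⟨x, hx⟩ : ∃ x, offset (walk p 0) (walk p (r + l + 1)) = x := ⟨_, rfl⟩
  rw [hx] at hxr hxl ⊢
  by_contra! hxe
  obtain ⟨j₁, hj₁, hj₁n, hy₁⟩ := h.exists_later (m := x - 1) (by omega) (by omega)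
    (by omega)
  obtain ⟨j₂, hj₂, hj₂n, hy₂⟩ := h.exists_later (m := x + 1) (by omega) (by omega)
    (by omega)
  obtain ⟨t, ht₁, ht₂, hflip⟩ := exists_flip (fun t => offset (walk p 0) (walk p t) < x)
    (a := j₁) (b := j₂) (by omega) (by omega)
  have hne : ∀ j, r + l + 1 < j → j < n → offset (walk p 0) (walk p j) ≠ x :=
    fun j hj hjn hjx => absurd (offset_walk_inj hjn hi (hjx.trans hx.symm)) (by omega)
  have hcur : offset (walk p 0) (walk p (r + l)) < r + 1 ∨
      n - l ≤ offset (walk p 0) (walk p (r + l)) := by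
    rcases h.last with h' | h' <;> omega
  have ht := h.unvisited t (by omega) (by omega)
  have ht' := h.unvisited (t + 1) (by omega) (by omega)
  have hne₁ := hne t (by omega) (by omega)
  have hne₂ := hne (t + 1) (by omega) (by omega)
  have hstep : s(walk p (r + l + 1), walk p (r + l)) ∈ pathEdges p :=
    Sym2.eq_swap ▸ walk_mem_pathEdges p hi
  have hlater := walk_mem_pathEdges p (t := t) (by omega)
  by_cases hlt : offset (walk p 0) (walk p t) < x
  · exact hp.2 _ hlater _ hstep
      (crosses_of_offset (v := walk p 0) (hx ▸ hlt) (by omega) (by omega))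
  · exact hp.2 _ (Sym2.eq_swap ▸ hlater) _ hstep
      (crosses_of_offset (v := walk p 0) (by omega) (by omega) (by omega))

lemma IsArcPrefix.succ_right (h : IsArcPrefix p r l) (hi : r + l + 1 < n)
    (hx : offset (walk p 0) (walk p (r + l + 1)) = r + 1) : IsArcPrefix p (r + 1) l where
  visited j hj := by
    rcases Nat.lt_or_ge j (r + l + 1) with hj' | hj'
    · rcases h.visited j (by omega) with h' | h' <;> omega
    · obtain rfl : j = r + l + 1 := by omega
      omega
  unvisited j hj hjn := by
    have := h.unvisited j (by omega) hjn
    have : offset (walk p 0) (walk p j) ≠ r + 1 := fun h' =>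
      absurd (offset_walk_inj hjn hi (h'.trans hx.symm)) (by omega)
    omega
  last := Or.inl (by rwa [Nat.add_right_comm])

lemma IsArcPrefix.succ_left (h : IsArcPrefix p r l) (hi : r + l + 1 < n)
    (hx : offset (walk p 0) (walk p (r + l + 1)) = n - l - 1) : IsArcPrefix p r (l + 1) where
  visited j hj := by
    rcases Nat.lt_or_ge j (r + l + 1) with hj' | hj'
    · rcases h.visited j (by omega) with h' | h' <;> omega
    · obtain rfl : j = r + l + 1 := by omega
      omega
  unvisited j hj hjn := by
    have := h.unvisited j (by omega) hjn
    have : offset (walk p 0) (walk p j) ≠ n - l - 1 := fun h' =>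
      absurd (offset_walk_inj hjn hi (h'.trans hx.symm)) (by omega)
    omega
  last := Or.inr (by rw [← add_assoc, hx]; omega)

lemma exists_isArcPrefix (hp : IsNCPath (pathEdges p)) :
    ∀ i < n, ∃ r l, r + l = i ∧ IsArcPrefix p r l := by
  intro i
  induction i with
  | zero => exact fun _ => ⟨0, 0, rfl, isArcPrefix_zero⟩
  | succ i ih =>
    intro hi
    obtain ⟨r, l, rfl, h⟩ := ih (by omega)
    rcases h.offset_succ hp hi with hx | hx
    · exact ⟨r + 1, l, by omega, h.succ_right hi hx⟩
    · exact ⟨r, l + 1, by omega, h.succ_left hi hx⟩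

end Arc

section Uniqueness

variable {n : ℕ} [NeZero n] {p q : Equiv.Perm (Fin n)} {r l : ℕ}

lemma IsArcPrefix.le_of_walk_eq {r' l' : ℕ} (hp : IsArcPrefix p r l) (hq : IsArcPrefix q r' l')
    (hpq : ∀ j ≤ r + l, walk p j = walk q j) (hsum : r' + l' = r + l) (hi : r + l + 1 < n) :
    r' ≤ r := by
  by_contra! hr
  obtain ⟨y, hy⟩ := exists_offset_eq (walk p 0) (show r + 1 < n by omega)
  obtain ⟨j, hj, rfl⟩ := exists_walk_eq q y
  rw [hpq 0 (Nat.zero_le _)] at hy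
  rcases le_or_gt j (r + l) with hjv | hju
  · have := hp.visited j hjv
    rw [hpq 0 (Nat.zero_le _), hpq j hjv] at this
    omega
  · have := hq.unvisited j (by omega) hj
    omega

lemma IsArcPrefix.offset_succ_of_not_isHullEdge (hp : IsNCPath (pathEdges p))
    (h : IsArcPrefix p r l) (hi : r + l + 1 < n)
    (hne : ¬ IsHullEdge s(walk p (r + l), walk p (r + l + 1))) :
    offset (walk p 0) (walk p (r + l + 1)) =
      if offset (walk p 0) (walk p (r + l)) = r then n - l - 1 else r + 1 := by
  have hlt := offset_lt (walk p 0) (walk p (r + l))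
  rcases h.offset_succ hp hi with hx | hx <;> split_ifs with hc
  · refine absurd (isHullEdge_mk_iff.mpr (Or.inl (offset_injective (walk p 0) ?_))) hne
    rw [offset_add_one (by omega), hx, hc]
  · exact hx
  · exact hx
  · have hc : offset (walk p 0) (walk p (r + l)) = n - l := h.last.resolve_left hc
    refine absurd (isHullEdge_mk_iff.mpr (Or.inr (offset_injective (walk p 0) ?_))) hne
    rw [offset_add_one (by omega), hx, hc]
    omega

lemma walk_succ_eq_of_mem_pathEdges {i : ℕ} (hpq : ∀ j ≤ i, walk p j = walk q j)
    (hi : i + 1 < n) (h : s(walk p i, walk p (i + 1)) ∈ pathEdges q) :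
    walk p (i + 1) = walk q (i + 1) := by
  obtain ⟨t, ht, he⟩ := (mem_pathEdges_iff q).mp h
  rcases Sym2.eq_iff.mp he with ⟨h₁, h₂⟩ | ⟨h₁, h₂⟩
  · obtain rfl := walk_inj q (by omega) (by omega) ((hpq i le_rfl).symm.trans h₁)
    exact h₂
  · obtain rfl := walk_inj q (by omega) ht ((hpq i le_rfl).symm.trans h₁)
    exact absurd (walk_inj p hi (by omega) (h₂.trans (hpq t (by omega)).symm)) (by omega)

/-- Two plane paths with the same hull edges that agree up to step `i` agree at step `i + 1`:
a hull step of either one is forced on the other, and otherwise both jump to the same end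
of the unvisited arc. -/
lemma walk_succ_eq (hp : IsNCPath (pathEdges p)) (hq : IsNCPath (pathEdges q))
    (hH : (pathEdges p).filter IsHullEdge = (pathEdges q).filter IsHullEdge) {i : ℕ}
    (hpq : ∀ j ≤ i, walk p j = walk q j) (hi : i + 1 < n) :
    walk p (i + 1) = walk q (i + 1) := by
  have forced : ∀ {p q : Equiv.Perm (Fin n)},
      (pathEdges p).filter IsHullEdge = (pathEdges q).filter IsHullEdge →
      (∀ j ≤ i, walk p j = walk q j) → IsHullEdge s(walk p i, walk p (i + 1)) →
      walk p (i + 1) = walk q (i + 1) := fun hH hpq hh =>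
    walk_succ_eq_of_mem_pathEdges hpq hi (Finset.mem_filter.mp
      (hH ▸ Finset.mem_filter.mpr ⟨walk_mem_pathEdges _ hi, hh⟩)).1
  by_cases hpH : IsHullEdge s(walk p i, walk p (i + 1))
  · exact forced hH hpq hpH
  by_cases hqH : IsHullEdge s(walk q i, walk q (i + 1))
  · exact (forced hH.symm (fun j hj => (hpq j hj).symm) hqH).symm
  obtain ⟨r, l, rfl, hpa⟩ := exists_isArcPrefix hp i (by omega)
  obtain ⟨r', l', hrl, hqa⟩ := exists_isArcPrefix hq (r + l) (by omega)
  have hr : r = r' := le_antisymm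
    (hqa.le_of_walk_eq hpa (fun j hj => (hpq j (by omega)).symm) hrl.symm (by omega))
    (hpa.le_of_walk_eq hqa hpq hrl hi)
  have hl : l = l' := by omega
  subst hr hl
  apply offset_injective (walk p 0)
  rw [hpa.offset_succ_of_not_isHullEdge hp hi hpH, hpq 0 (Nat.zero_le _), hpq (r + l) le_rfl,
    hqa.offset_succ_of_not_isHullEdge hq hi hqH]

theorem eq_of_hullEdges_eq (hp : IsNCPath (pathEdges p)) (hq : IsNCPath (pathEdges q))
    (hH : (pathEdges p).filter IsHullEdge = (pathEdges q).filter IsHullEdge) (h0 : p 0 = q 0) :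
    p = q := by
  have agree : ∀ i < n, ∀ j ≤ i, walk p j = walk q j := by
    intro i
    induction i with
    | zero =>
      intro _ j hj
      obtain rfl : j = 0 := by omega
      rw [walk_zero, walk_zero, h0]
    | succ i ih =>
      intro hi j hj
      rcases Nat.lt_or_ge j (i + 1) with hj' | hj'
      · exact ih (by omega) j (by omega)
      · obtain rfl : j = i + 1 := by omega
        exact walk_succ_eq hp hq hH (ih (by omega)) hi
  ext x
  rw [← walk_val p, ← walk_val q, agree x.val x.isLt x.val le_rfl]

end Uniqueness

section Counting

variable {n : ℕ} [NeZero n]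

/-- The endpoints of the boundary paths formed by the hull edges in `H`. -/
def arcEnds (H : Finset (Sym2 (Fin n))) : Finset (Fin n) :=
  Finset.univ.filter fun z => hullEdge z ∉ H ∨ hullEdge (z - 1) ∉ H

lemma card_arcEnds_le (hn : 3 ≤ n) {H : Finset (Sym2 (Fin n))} (hH : ∀ e ∈ H, IsHullEdge e) :
    (arcEnds H).card ≤ 2 * (n - H.card) := by
  have hshift : (Finset.univ.filter fun z => hullEdge (z - 1) ∉ H).card =
      (Finset.univ.filter fun z => hullEdge z ∉ H).card :=
    Finset.card_equiv (Equiv.subRight 1) (by simp)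
  rw [arcEnds, Finset.filter_or]
  refine (Finset.card_union_le _ _).trans ?_
  rw [hshift, card_filter_hullEdge_not_mem hn hH]
  omega

lemma start_mem_arcEnds (hn : 3 ≤ n) (p : Equiv.Perm (Fin n)) :
    p 0 ∈ arcEnds ((pathEdges p).filter IsHullEdge) := by
  simpa [arcEnds, isHullEdge_hullEdge] using hullEdge_start_not_mem p hn

omit [NeZero n] in
lemma reverse_ne (hn : 2 ≤ n) (p : Equiv.Perm (Fin n)) : Fin.revPerm.trans p ≠ p := by
  intro h
  have := congrArg Fin.val (p.injective (Equiv.ext_iff.mp h ⟨0, by omega⟩))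
  simp only [Fin.revPerm_apply, Fin.val_rev] at this
  omega

lemma two_mul_card_le_card_arcEnds (hn : 3 ≤ n) (H : Finset (Sym2 (Fin n))) :
    2 * (Finset.univ.filter fun w : PVert n => w.1.filter IsHullEdge = H).card ≤
      (arcEnds H).card := by
  choose perm hperm using fun w : PVert n => w.2.1
  let orient : PVert n × Bool → Equiv.Perm (Fin n) := fun wb =>
    if wb.2 then Fin.revPerm.trans (perm wb.1) else perm wb.1
  have hedges : ∀ wb, pathEdges (orient wb) = wb.1.1 := by
    rintro ⟨w, b⟩
    cases b <;> simp [orient, pathEdges_reverse, hperm]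
  rw [mul_comm, ← Fintype.card_bool, ← Finset.card_univ, ← Finset.card_product]
  refine Finset.card_le_card_of_injOn (fun wb => orient wb 0) (fun wb hwb => ?_) ?_
  · have hH := (Finset.mem_filter.mp (Finset.mem_product.mp hwb).1).2
    simpa [hedges, hH] using start_mem_arcEnds hn (orient wb)
  · rintro ⟨w, b⟩ hwb ⟨w', b'⟩ hwb' h0
    have hH := (Finset.mem_filter.mp (Finset.mem_product.mp hwb).1).2
    have hH' := (Finset.mem_filter.mp (Finset.mem_product.mp hwb').1).2
    have horient : orient (w, b) = orient (w', b') :=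
      eq_of_hullEdges_eq (by rw [hedges]; exact w.2) (by rw [hedges]; exact w'.2)
        (by rw [hedges, hedges, hH, hH']) h0
    obtain rfl : w = w' := Subtype.ext (by rw [← hedges (w, b), horient, hedges])
    cases b <;> cases b'
    · rfl
    · exact absurd horient.symm (reverse_ne (by omega) _)
    · exact absurd horient (reverse_ne (by omega) _)
    · rfl

end Counting

/-- Let `H` be a set of hull edges; it decomposes into `k = n - |H|` disjoint
boundary arcs (possibly degenerate) covering the vertices in cyclic order.
Then there are at most `k` plane spanning paths whose set of hull edges is
exactly `H` (each obtained by adding `k - 1` diagonals). -/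
theorem completions_le (n : ℕ) (hn : 3 ≤ n) (H : Finset (Sym2 (Fin n)))
    (hH : ∀ e ∈ H, IsHullEdge e) :
    {w : PVert n | w.1.filter (fun e => IsHullEdge e) = H}.ncard ≤ n - H.card := by
  have : NeZero n := ⟨by omega⟩
  have hfin : {w : PVert n | w.1.filter (fun e => IsHullEdge e) = H} =
      ↑(Finset.univ.filter fun w : PVert n => w.1.filter IsHullEdge = H) := by
    ext; simp
  rw [hfin, Set.ncard_coe_finset]
  have := (two_mul_card_le_card_arcEnds hn H).trans (card_arcEnds_le hn hH)
  omega

end PG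
end
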